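/- arXiv:2106.06832 — 2 statements merged into one kernel-verified Lean document; each statement's English description precedes it below -/
import Mathlib

section
/- Let ℓ>0 and α ∈ [0,2) with α ≠ 1. For all u with ∫₀^ℓ x^α |u'|² dx < ∞ and u(ℓ)=0, one has ∫₀^ℓ |u(x)|² dx ≤ (ℓ^{2-α}/(2-α)) ∫₀^ℓ x^α |u'(x)|² dx. -/
/-!
Since `u ℓ = 0`, `u x = -∫_x^ℓ u'`, and Cauchy–Schwarz against the weight `t ^ α` gives
`u x ^ 2 ≤ (∫_x^ℓ t ^ (-α)) * ∫_x^ℓ t ^ α * u' ^ 2`, where the first factor equals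
`(ℓ ^ (1 - α) - x ^ (1 - α)) / (1 - α)`. Integrating this pointwise bound over `x ∈ (0, ℓ)`
produces the constant `ℓ ^ (2 - α) / (2 - α)`.
-/

open MeasureTheory Set

theorem two_mul_abs_le_inv_add_mul_sq {w f : ℝ} (hw : 0 < w) : 2 * |f| ≤ w⁻¹ + w * f ^ 2 := by
  have hgap : w * (w⁻¹ + w * f ^ 2 - 2 * |f|) = (1 - w * |f|) ^ 2 := by
    field_simp
    rw [← sq_abs f]
    ring
  have hgap₀ := hgap ▸ sq_nonneg (1 - w * |f|)
  linarith [(mul_nonneg_iff_of_pos_left hw).1 hgap₀]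

section WeightedCauchySchwarz

variable {X : Type*} [MeasurableSpace X] {μ : Measure X}

theorem sq_integral_mul_le_integral_sq_mul_integral_sq {f g : X → ℝ}
    (hf₀ : 0 ≤ᵐ[μ] f) (hg₀ : 0 ≤ᵐ[μ] g) (hf : MemLp f 2 μ) (hg : MemLp g 2 μ) :
    (∫ a, f a * g a ∂μ) ^ 2 ≤ (∫ a, f a ^ 2 ∂μ) * ∫ a, g a ^ 2 ∂μ := by
  have holder := integral_mul_le_Lp_mul_Lq_of_nonneg Real.HolderConjugate.two_two hf₀ hg₀
    (by simpa using hf) (by simpa using hg)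
  simp only [Real.rpow_two, ← Real.sqrt_eq_rpow] at holder
  have hfg₀ : 0 ≤ ∫ a, f a * g a ∂μ :=
    integral_nonneg_of_ae (by filter_upwards [hf₀, hg₀] with a ha hb using mul_nonneg ha hb)
  calc (∫ a, f a * g a ∂μ) ^ 2
      ≤ (√(∫ a, f a ^ 2 ∂μ) * √(∫ a, g a ^ 2 ∂μ)) ^ 2 := pow_le_pow_left₀ hfg₀ holder 2
    _ = (∫ a, f a ^ 2 ∂μ) * ∫ a, g a ^ 2 ∂μ := by
      rw [mul_pow, Real.sq_sqrt (integral_nonneg fun _ => sq_nonneg _),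
        Real.sq_sqrt (integral_nonneg fun _ => sq_nonneg _)]

variable {w f : X → ℝ}

theorem integrable_of_integrable_inv_of_integrable_mul_sq (hf : AEStronglyMeasurable f μ)
    (hw : ∀ᵐ a ∂μ, 0 < w a) (hwinv : Integrable (fun a => (w a)⁻¹) μ)
    (hwf : Integrable (fun a => w a * f a ^ 2) μ) : Integrable f μ := by
  refine ((hwinv.add hwf).div_const 2).mono' hf ?_
  filter_upwards [hw] with a ha
  have := two_mul_abs_le_inv_add_mul_sq (f := f a) ha
  rw [Real.norm_eq_abs]
  simp only [Pi.add_apply]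
  linarith

theorem sq_integral_abs_le_integral_inv_mul_integral_mul_sq (hw : ∀ᵐ a ∂μ, 0 < w a)
    (hwinv : Integrable (fun a => (w a)⁻¹) μ) (hwf : Integrable (fun a => w a * f a ^ 2) μ) :
    (∫ a, |f a| ∂μ) ^ 2 ≤ (∫ a, (w a)⁻¹ ∂μ) * ∫ a, w a * f a ^ 2 ∂μ := by
  -- `|f| = √(w⁻¹) · √(w f²)`, and both factors are square integrable.
  have hprod : (fun a => |f a|) =ᵐ[μ] fun a => √(w a)⁻¹ * √(w a * f a ^ 2) := by
    filter_upwards [hw] with a ha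
    rw [← Real.sqrt_mul (inv_nonneg.2 ha.le), inv_mul_cancel_left₀ ha.ne', Real.sqrt_sq_eq_abs]
  have sqrt_memLp_two {g : X → ℝ} (hg₀ : 0 ≤ᵐ[μ] g) (hg : Integrable g μ) :
      MemLp (fun a => √(g a)) 2 μ ∧ (fun a => √(g a) ^ 2) =ᵐ[μ] g := by
    have heq : (fun a => √(g a) ^ 2) =ᵐ[μ] g := by
      filter_upwards [hg₀] with a ha using Real.sq_sqrt ha
    exact ⟨(memLp_two_iff_integrable_sq
      (Real.continuous_sqrt.comp_aestronglyMeasurable hg.aestronglyMeasurable)).2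
      (hg.congr heq.symm), heq⟩
  have hwinv₀ : 0 ≤ᵐ[μ] fun a => (w a)⁻¹ := by
    filter_upwards [hw] with a ha using inv_nonneg.2 ha.le
  have hwf₀ : 0 ≤ᵐ[μ] fun a => w a * f a ^ 2 := by
    filter_upwards [hw] with a ha using mul_nonneg ha.le (sq_nonneg _)
  obtain ⟨hL, hLsq⟩ := sqrt_memLp_two hwinv₀ hwinv
  obtain ⟨hR, hRsq⟩ := sqrt_memLp_two hwf₀ hwf
  rw [integral_congr_ae hprod, ← integral_congr_ae hLsq, ← integral_congr_ae hRsq]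
  exact sq_integral_mul_le_integral_sq_mul_integral_sq
    (ae_of_all _ fun _ => Real.sqrt_nonneg _)
    (ae_of_all _ fun _ => Real.sqrt_nonneg _) hL hR

end WeightedCauchySchwarz

theorem sq_le_integral_rpow_neg_mul_setIntegral_rpow_mul_deriv_sq {u : ℝ → ℝ} {x ℓ α : ℝ}
    (hx : 0 < x) (hxℓ : x ≤ ℓ) (hdiff : ∀ t ∈ Icc x ℓ, DifferentiableAt ℝ u t) (huℓ : u ℓ = 0)
    (hw : IntegrableOn (fun t => t ^ α * deriv u t ^ 2) (Ioc x ℓ)) :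
    u x ^ 2 ≤ (∫ t in x..ℓ, t ^ (-α)) * ∫ t in Ioc x ℓ, t ^ α * deriv u t ^ 2 := by
  have hpos : ∀ᵐ t ∂volume.restrict (Ioc x ℓ), 0 < t ^ α := by
    filter_upwards [ae_restrict_mem measurableSet_Ioc] with t ht
    exact Real.rpow_pos_of_pos (hx.trans ht.1) α
  have hinv : ∫ t in x..ℓ, t ^ (-α) = ∫ t in Ioc x ℓ, (t ^ α)⁻¹ := by
    rw [intervalIntegral.integral_of_le hxℓ]
    exact setIntegral_congr_fun measurableSet_Ioc
      fun t ht => Real.rpow_neg (hx.trans ht.1).le α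
  have hinvInt : IntegrableOn (fun t => (t ^ α)⁻¹) (Ioc x ℓ) := by
    refine (ContinuousOn.integrableOn_Icc ?_).mono_set Ioc_subset_Icc_self
    exact (continuousOn_id.rpow_const fun t ht => Or.inl (hx.trans_le ht.1).ne').inv₀
      fun t ht => (Real.rpow_pos_of_pos (hx.trans_le ht.1) α).ne'
  have hderivInt : IntegrableOn (deriv u) (Ioc x ℓ) :=
    integrable_of_integrable_inv_of_integrable_mul_sq
      (measurable_deriv u).aestronglyMeasurable hpos hinvInt hw
  have hux : u x = -∫ t in Ioc x ℓ, deriv u t := by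
    rw [← intervalIntegral.integral_of_le hxℓ, intervalIntegral.integral_deriv_eq_sub
      (fun t ht => hdiff t (uIcc_of_le hxℓ ▸ ht))
      ((intervalIntegrable_iff_integrableOn_Ioc_of_le hxℓ).2 hderivInt), huℓ]
    ring
  calc u x ^ 2 = |∫ t in Ioc x ℓ, deriv u t| ^ 2 := by rw [hux, sq_abs, neg_sq]
    _ ≤ (∫ t in Ioc x ℓ, |deriv u t|) ^ 2 :=
      pow_le_pow_left₀ (abs_nonneg _) abs_integral_le_integral_abs 2
    _ ≤ _ := hinv ▸ sq_integral_abs_le_integral_inv_mul_integral_mul_sq hpos hinvInt hw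

theorem integral_rpow_sub_rpow_div {ℓ r : ℝ} (hℓ : 0 ≤ ℓ) (hr : -1 < r) (hr₀ : r ≠ 0) :
    ∫ x in (0)..ℓ, (ℓ ^ r - x ^ r) / r = ℓ ^ (r + 1) / (r + 1) := by
  have hr₁ : r + 1 ≠ 0 := by linarith
  rw [intervalIntegral.integral_div, intervalIntegral.integral_sub intervalIntegrable_const
    (intervalIntegral.intervalIntegrable_rpow' hr), intervalIntegral.integral_const,
    integral_rpow (Or.inl hr), Real.zero_rpow hr₁, smul_eq_mul, sub_zero, sub_zero,
    Real.rpow_add' hℓ hr₁, Real.rpow_one]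
  field_simp
  ring

theorem weighted_poincare_alpha_ne_one_general
    (ℓ α : ℝ) (hℓ : 0 < ℓ) (hα2 : α < 2) (hα1 : α ≠ 1)
    (u : ℝ → ℝ)
    (hdiff : ∀ x ∈ Set.Ioc (0:ℝ) ℓ, DifferentiableAt ℝ u x)
    (huℓ : u ℓ = 0)
    (hw : MeasureTheory.IntegrableOn (fun x => x ^ α * (deriv u x)^2) (Set.Ioo 0 ℓ)) :
    ∫ x in Set.Ioo (0:ℝ) ℓ, (u x)^2
      ≤ (ℓ ^ (2 - α) / (2 - α)) * ∫ x in Set.Ioo (0:ℝ) ℓ, x ^ α * (deriv u x)^2 := by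
  set I := ∫ x in Ioo (0:ℝ) ℓ, x ^ α * deriv u x ^ 2
  have hr : -1 < 1 - α := by linarith
  have hr₀ : 1 - α ≠ 0 := sub_ne_zero.2 hα1.symm
  have hpointwise : ∀ x ∈ Ioo 0 ℓ, u x ^ 2 ≤ (ℓ ^ (1 - α) - x ^ (1 - α)) / (1 - α) * I := by
    intro x ⟨hx, hxℓ⟩
    have hsub : Ioc x ℓ ≤ᵐ[volume] Ioo 0 ℓ :=
      (Ioc_subset_Ioc_left hx.le).eventuallyLE.trans Ioo_ae_eq_Ioc.symm.le
    calc u x ^ 2 ≤ (∫ t in x..ℓ, t ^ (-α)) * ∫ t in Ioc x ℓ, t ^ α * deriv u t ^ 2 :=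
          sq_le_integral_rpow_neg_mul_setIntegral_rpow_mul_deriv_sq hx hxℓ.le
            (fun t ht => hdiff t ⟨hx.trans_le ht.1, ht.2⟩) huℓ (hw.mono_set_ae hsub)
      _ ≤ (∫ t in x..ℓ, t ^ (-α)) * I := by
          gcongr
          · exact intervalIntegral.integral_nonneg hxℓ.le
              fun t ht => Real.rpow_nonneg (hx.le.trans ht.1) _
          · exact setIntegral_mono_set hw (ae_restrict_of_forall_mem measurableSet_Ioo
              fun t ht => mul_nonneg (Real.rpow_nonneg ht.1.le α) (sq_nonneg _)) hsub
      _ = (ℓ ^ (1 - α) - x ^ (1 - α)) / (1 - α) * I := by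
          rw [integral_rpow (Or.inr ⟨by simpa using hα1, by simp [uIcc_of_le hxℓ.le, hx.not_ge]⟩)]
          ring_nf
  have hbound : IntegrableOn (fun x => (ℓ ^ (1 - α) - x ^ (1 - α)) / (1 - α) * I) (Ioo 0 ℓ) :=
    ((intervalIntegrable_iff_integrableOn_Ioo_of_le hℓ.le).1
      ((intervalIntegrable_const.sub (intervalIntegral.intervalIntegrable_rpow' hr)).div_const
        _)).mul_const I
  calc ∫ x in Ioo 0 ℓ, u x ^ 2 ≤ ∫ x in Ioo 0 ℓ, (ℓ ^ (1 - α) - x ^ (1 - α)) / (1 - α) * I :=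
        integral_mono_of_nonneg (ae_of_all _ fun _ => sq_nonneg _) hbound
          (ae_restrict_of_forall_mem measurableSet_Ioo hpointwise)
    _ = ℓ ^ (2 - α) / (2 - α) * I := by
        rw [integral_mul_const, ← integral_Ioc_eq_integral_Ioo,
          ← intervalIntegral.integral_of_le hℓ.le, integral_rpow_sub_rpow_div hℓ.le hr hr₀]
        ring_nf

/-- Weighted Poincaré inequality for `α ∈ [0,2)`, `α ≠ 1`:
`∫₀^ℓ u² ≤ (ℓ^{2-α}/(2-α)) ∫₀^ℓ x^α (u')²` for `u` with `u ℓ = 0`. -/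
theorem weighted_poincare_alpha_ne_one
    (ℓ α : ℝ) (hℓ : 0 < ℓ) (hα0 : 0 ≤ α) (hα2 : α < 2) (hα1 : α ≠ 1)
    (u : ℝ → ℝ)
    (hdiff : ∀ x ∈ Set.Ioc (0:ℝ) ℓ, DifferentiableAt ℝ u x)
    (huℓ : u ℓ = 0)
    (hL2 : MeasureTheory.IntegrableOn (fun x => (u x)^2) (Set.Ioo 0 ℓ))
    (hw : MeasureTheory.IntegrableOn (fun x => x ^ α * (deriv u x)^2) (Set.Ioo 0 ℓ)) :
    ∫ x in Set.Ioo (0:ℝ) ℓ, (u x)^2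
      ≤ (ℓ ^ (2 - α) / (2 - α)) * ∫ x in Set.Ioo (0:ℝ) ℓ, x ^ α * (deriv u x)^2 :=
  weighted_poincare_alpha_ne_one_general ℓ α hℓ hα2 hα1 u hdiff huℓ hw
end

section
/- Let G(t,τ) = (πt)^{-1/2} e^{-τ²/(4t)}. For any bounded measurable η : (0,∞) → ℝ, if ∫₀^∞ η(τ) G(t,τ) dτ = 0 for all t > 0, then η = 0 almost everywhere on (0,∞). -/
/-!
With `t = 1/(4s)` the hypothesis says `∫₀^∞ η(τ) e^{-sτ²} dτ = 0` for all `s > 0`. Hence the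
integrable function `f = η e^{-τ²}` has vanishing moments against `u = e^{-τ²} ∈ [0, 1]`, and by
Weierstrass `∫ f · φ(u) = 0` for every `φ ∈ C([0, 1])`. Every continuous `g` on `[0, ∞)` with a
limit `c` at infinity has the form `φ ∘ u`, with `φ(x) = g(√(-log x))` and `φ(0) = c`, so `f`
vanishes against every test function on `(0, ∞)`, hence almost everywhere, and so does `η`.
-/

open MeasureTheory Set

/-- The Reznitskaya transform kernel `G(t,τ) = (πt)^{-1/2} e^{-τ²/(4t)}`. -/
noncomputable def G (t τ : ℝ) : ℝ :=
  (Real.sqrt (Real.pi * t))⁻¹ * Real.exp (-(τ^2) / (4 * t))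

open Filter Topology Polynomial

section PolynomialMoments

variable {α : Type*} [MeasurableSpace α] {μ : Measure α} {f : α → ℝ}
  {s : Set ℝ} [CompactSpace s] {u : α → s}

lemma integrable_mul_continuousMap_comp (hf : Integrable f μ) (hu : Measurable u)
    (φ : C(s, ℝ)) : Integrable (fun x => f x * φ (u x)) μ :=
  hf.mul_bdd (φ.continuous.measurable.comp hu).aestronglyMeasurable
    (ae_of_all _ fun x => φ.norm_coe_le_norm (u x))

lemma norm_integral_mul_continuousMap_comp_le (hf : Integrable f μ) (φ : C(s, ℝ)) :
    ‖∫ x, f x * φ (u x) ∂μ‖ ≤ (∫ x, ‖f x‖ ∂μ) * ‖φ‖ :=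
  calc ‖∫ x, f x * φ (u x) ∂μ‖ ≤ ∫ x, ‖f x‖ * ‖φ‖ ∂μ :=
        norm_integral_le_of_norm_le (hf.norm.mul_const _) <| ae_of_all _ fun x => by
          rw [norm_mul]
          gcongr
          exact φ.norm_coe_le_norm (u x)
    _ = (∫ x, ‖f x‖ ∂μ) * ‖φ‖ := integral_mul_const _ _

noncomputable def integralMulCompCLM (hf : Integrable f μ) (hu : Measurable u) :
    C(s, ℝ) →L[ℝ] ℝ :=
  LinearMap.mkContinuous
    { toFun := fun φ => ∫ x, f x * φ (u x) ∂μ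
      map_add' := fun φ ψ => by
        simp only [ContinuousMap.add_apply, mul_add]
        exact integral_add (integrable_mul_continuousMap_comp hf hu φ)
          (integrable_mul_continuousMap_comp hf hu ψ)
      map_smul' := fun c φ => by
        simp only [ContinuousMap.smul_apply, smul_eq_mul, RingHom.id_apply, mul_left_comm _ c]
        exact integral_const_mul c _ }
    (∫ x, ‖f x‖ ∂μ) (norm_integral_mul_continuousMap_comp_le hf)

lemma integralMulCompCLM_apply (hf : Integrable f μ) (hu : Measurable u) (φ : C(s, ℝ)) :
    integralMulCompCLM hf hu φ = ∫ x, f x * φ (u x) ∂μ := rfl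

theorem integral_mul_continuousMap_comp_eq_zero_of_moments (hf : Integrable f μ)
    (hu : Measurable u) (hmom : ∀ n : ℕ, ∫ x, f x * (u x : ℝ) ^ n ∂μ = 0) (φ : C(s, ℝ)) :
    ∫ x, f x * φ (u x) ∂μ = 0 := by
  set L := integralMulCompCLM hf hu
  have hpoly : (polynomialFunctions s : Set C(s, ℝ)) ⊆ L ⁻¹' {0} := by
    rw [polynomialFunctions_coe]
    rintro _ ⟨p, rfl⟩
    induction p using Polynomial.induction_on' with
    | add p q hp hq =>
      simp only [mem_preimage, mem_singleton_iff, map_add] at hp hq ⊢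
      rw [hp, hq, add_zero]
    | monomial n a =>
      simp [L, integralMulCompCLM_apply, ← C_mul_X_pow_eq_monomial, mul_left_comm _ a,
        integral_const_mul, hmom]
  have hφ : φ ∈ closure (polynomialFunctions s : Set C(s, ℝ)) := by
    rw [← Subalgebra.topologicalClosure_coe, polynomialFunctions.topologicalClosure]
    trivial
  exact closure_minimal hpoly (isClosed_singleton.preimage L.continuous) hφ

end PolynomialMoments

noncomputable def expNegSq (τ : ℝ) : Icc (0 : ℝ) 1 :=
  ⟨Real.exp (-τ ^ 2), (Real.exp_pos _).le,
    Real.exp_le_one_iff.mpr (neg_nonpos.mpr (sq_nonneg τ))⟩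

lemma measurable_expNegSq : Measurable expNegSq :=
  Measurable.subtype_mk (by fun_prop)

lemma exists_continuousMap_comp_expNegSq {g : ℝ → ℝ} (hg : Continuous g) {c : ℝ}
    (hc : Tendsto g atTop (𝓝 c)) :
    ∃ φ : C(Icc (0 : ℝ) 1, ℝ), ∀ τ, 0 ≤ τ → φ (expNegSq τ) = g τ := by
  classical
  set ψ : ℝ → ℝ := Function.update (fun x => g √(-Real.log x)) 0 c
  have hψ : ContinuousOn ψ (Icc 0 1) := by
    intro x hx
    rcases hx.1.eq_or_lt with rfl | hx0
    · rw [continuousWithinAt_update_same]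
      refine (hc.comp (Real.tendsto_sqrt_atTop.comp
        (tendsto_neg_atBot_atTop.comp Real.tendsto_log_nhdsGT_zero))).mono_left
        (nhdsWithin_mono _ fun y hy => lt_of_le_of_ne hy.1.1 (Ne.symm hy.2))
    · refine (continuousAt_update_of_ne hx0.ne' |>.mpr ?_).continuousWithinAt
      exact hg.continuousAt.comp (by fun_prop (disch := exact hx0.ne'))
  refine ⟨⟨fun x => ψ x, continuousOn_iff_continuous_domRestrict.mp hψ⟩, fun τ hτ => ?_⟩
  change ψ (Real.exp (-τ ^ 2)) = g τ
  simp only [ψ]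
  rw [Function.update_of_ne (Real.exp_ne_zero _)]
  simp [Real.sqrt_sq hτ]

lemma integral_mul_exp_neg_mul_sq_eq_zero {η : ℝ → ℝ} {μ : Measure ℝ}
    (h0 : ∀ t : ℝ, 0 < t → ∫ τ, η τ * G t τ ∂μ = 0) {s : ℝ} (hs : 0 < s) :
    ∫ τ, η τ * Real.exp (-(s * τ ^ 2)) ∂μ = 0 := by
  have hG : ∀ τ, η τ * G (4 * s)⁻¹ τ =
      (√(Real.pi * (4 * s)⁻¹))⁻¹ * (η τ * Real.exp (-(s * τ ^ 2))) := fun τ => by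
    rw [G]
    field_simp
  have h := h0 (4 * s)⁻¹ (by positivity)
  rw [funext hG, integral_const_mul] at h
  exact (mul_eq_zero.1 h).resolve_left (by positivity)

lemma integrable_mul_exp_neg_sq {η : ℝ → ℝ} (hη : Measurable η)
    (hbd : ∃ M : ℝ, ∀ τ, |η τ| ≤ M) :
    Integrable (fun τ => η τ * Real.exp (-τ ^ 2)) := by
  obtain ⟨M, hM⟩ := hbd
  simpa using (integrable_exp_neg_mul_sq one_pos).bdd_mul hη.aestronglyMeasurable
    (ae_of_all _ hM)

/-- Injectivity of the Reznitskaya transform: if `η` is bounded measurable and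
`∫₀^∞ η(τ) G(t,τ) dτ = 0` for all `t > 0`, then `η = 0` a.e. on `(0,∞)`. -/
theorem reznitskaya_injective
    (η : ℝ → ℝ) (hmeas : Measurable η)
    (hbd : ∃ M : ℝ, ∀ τ : ℝ, |η τ| ≤ M)
    (h0 : ∀ t : ℝ, 0 < t → ∫ τ in Set.Ioi (0:ℝ), η τ * G t τ = 0) :
    ∀ᵐ τ ∂(MeasureTheory.volume.restrict (Set.Ioi (0:ℝ))), η τ = 0 := by
  set μ := volume.restrict (Ioi (0 : ℝ))
  set f := fun τ => η τ * Real.exp (-τ ^ 2)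
  have hf : Integrable f μ := (integrable_mul_exp_neg_sq hmeas hbd).restrict
  have hmom (n : ℕ) : ∫ τ, f τ * (expNegSq τ : ℝ) ^ n ∂μ = 0 := by
    refine (integral_congr_ae (ae_of_all _ fun τ => ?_)).trans
      (integral_mul_exp_neg_mul_sq_eq_zero h0 (s := n + 1) (by positivity))
    change η τ * Real.exp (-τ ^ 2) * Real.exp (-τ ^ 2) ^ n = _
    rw [mul_assoc, ← Real.exp_nat_mul, ← Real.exp_add]
    ring_nf
  have hf0 : ∀ᵐ τ ∂μ, f τ = 0 := by
    refine ae_eq_zero_of_integral_contDiff_smul_eq_zero hf.locallyIntegrable fun g hg hgc => ?_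
    obtain ⟨φ, hφ⟩ := exists_continuousMap_comp_expNegSq hg.continuous
      (hgc.is_zero_at_infty.mono_left atTop_le_cocompact)
    calc ∫ τ, g τ • f τ ∂μ = ∫ τ, f τ * φ (expNegSq τ) ∂μ :=
          setIntegral_congr_fun measurableSet_Ioi fun τ hτ => by
            rw [hφ τ (le_of_lt hτ), smul_eq_mul, mul_comm]
      _ = 0 := integral_mul_continuousMap_comp_eq_zero_of_moments hf measurable_expNegSq hmom φ
  filter_upwards [hf0] with τ hτ
  exact (mul_eq_zero.1 hτ).resolve_right (Real.exp_ne_zero _)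
end
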